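/- arXiv:2409.00645 — 4 statements merged into one kernel-verified Lean document; each statement's English description precedes it below -/
import Mathlib

section
/- With V the disjoint union of m copies of a finite group G and N the normalizer of R(G) in Sym(V), the kernel K of the action of N on the set of orbits {G_1, …, G_m} of R(G) equals L ⋊ Aut(G) = (L_1 × ⋯ × L_m) ⋊ Aut(G), and also K = (L_1 × ⋯ × L_{r-1} × R(G) × L_{r+1} × ⋯ × L_m) ⋊ Aut(G) for every 1 ≤ r ≤ m. -/
/-- Right multiplication permutation `R(g) : x_i ↦ (xg)_i` on `V = Fin m × G`. -/
def Rperm (m : ℕ) {G : Type*} [Group G] (g : G) : Equiv.Perm (Fin m × G) where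
  toFun v := (v.1, v.2 * g)
  invFun v := (v.1, v.2 * g⁻¹)
  left_inv v := by simp
  right_inv v := by simp

/-- The subgroup `R(G) = {R(g) : g ∈ G}` of `Sym(V)`. -/
def RG (m : ℕ) (G : Type*) [Group G] : Subgroup (Equiv.Perm (Fin m × G)) where
  carrier := {σ | ∃ g : G, σ = Rperm m g}
  one_mem' := ⟨1, Equiv.ext fun v => by simp [Rperm]⟩
  mul_mem' := by
    rintro _ _ ⟨g, rfl⟩ ⟨h, rfl⟩
    exact ⟨h * g, Equiv.ext fun v => by simp [Rperm, mul_assoc]⟩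
  inv_mem' := by
    rintro _ ⟨g, rfl⟩
    exact ⟨g⁻¹, Equiv.ext fun v => by
      simp [Rperm, Equiv.Perm.inv_def]⟩

/-- `LLperm f : x_i ↦ ((f i)⁻¹ x)_i`, the product `L_1(f 1) ⋯ L_m(f m)`. -/
def LLperm (m : ℕ) {G : Type*} [Group G] (f : Fin m → G) : Equiv.Perm (Fin m × G) where
  toFun v := (v.1, (f v.1)⁻¹ * v.2)
  invFun v := (v.1, f v.1 * v.2)
  left_inv v := by simp
  right_inv v := by simp

/-- The subgroup `L = L_1 × ⋯ × L_m` of `Sym(V)`. -/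
def LL (m : ℕ) (G : Type*) [Group G] : Subgroup (Equiv.Perm (Fin m × G)) where
  carrier := {σ | ∃ f : Fin m → G, σ = LLperm m f}
  one_mem' := ⟨fun _ => 1, Equiv.ext fun v => by simp [LLperm]⟩
  mul_mem' := by
    rintro _ _ ⟨f, rfl⟩ ⟨f', rfl⟩
    exact ⟨fun i => f' i * f i, Equiv.ext fun v => by simp [LLperm, mul_assoc]⟩
  inv_mem' := by
    rintro _ ⟨f, rfl⟩
    exact ⟨fun i => (f i)⁻¹, Equiv.ext fun v => by
      simp [LLperm, Equiv.Perm.inv_def]⟩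

/-- `Aut(G)` acting diagonally on `V`: `α : x_i ↦ (x^α)_i`. -/
def Aperm (m : ℕ) {G : Type*} [Group G] (α : MulAut G) : Equiv.Perm (Fin m × G) :=
  Equiv.prodCongr (Equiv.refl (Fin m)) α.toEquiv

/-- The image of `Aut(G)` in `Sym(V)`. -/
def Asub (m : ℕ) (G : Type*) [Group G] : Subgroup (Equiv.Perm (Fin m × G)) where
  carrier := {p | ∃ α : MulAut G, p = Aperm m α}
  one_mem' := ⟨1, Equiv.ext fun v => by simp [Aperm]⟩
  mul_mem' := by
    rintro _ _ ⟨α, rfl⟩ ⟨β, rfl⟩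
    exact ⟨α * β, Equiv.ext fun v => by cases v; simp [Aperm]⟩
  inv_mem' := by
    rintro _ ⟨α, rfl⟩
    exact ⟨α⁻¹, Equiv.ext fun v => by cases v; simp [Aperm, Equiv.Perm.inv_def, MulAut.inv_def]⟩


/-- The kernel of the action on the block system `{G_1, …, G_m}`: permutations of
`V` fixing each copy `G_i` setwise. -/
def blockKer (m : ℕ) (G : Type*) [Group G] : Subgroup (Equiv.Perm (Fin m × G)) where
  carrier := {σ | ∀ v : Fin m × G, (σ v).1 = v.1}
  one_mem' := fun v => rfl
  mul_mem' := by
    intro a b ha hb v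
    simpa using (ha (b v)).trans (hb v)
  inv_mem' := by
    intro a ha v
    have := ha (a⁻¹ v)
    simpa using this.symm

/-- The subgroup `L_1 × ⋯ × L_{r-1} × L_{r+1} × ⋯ × L_m` (left multiplications
that are trivial on the `r`-th copy). -/
def Lnot (m : ℕ) (G : Type*) [Group G] (r : Fin m) : Subgroup (Equiv.Perm (Fin m × G)) where
  carrier := {σ | ∃ f : Fin m → G, f r = 1 ∧ σ = LLperm m f}
  one_mem' := ⟨fun _ => 1, rfl, Equiv.ext fun v => by simp [LLperm]⟩
  mul_mem' := by
    rintro _ _ ⟨f, hf, rfl⟩ ⟨f', hf', rfl⟩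
    exact ⟨fun i => f' i * f i, by simp [hf, hf'],
      Equiv.ext fun v => by simp [LLperm, mul_assoc]⟩
  inv_mem' := by
    rintro _ ⟨f, hf, rfl⟩
    exact ⟨fun i => (f i)⁻¹, by simp [hf], Equiv.ext fun v => by
      simp [LLperm, Equiv.Perm.inv_def]⟩

section Aux

set_option linter.unusedSectionVars false

variable {G : Type*} [Group G] {m : ℕ}

@[simp] lemma Rperm_apply (g : G) (v : Fin m × G) : Rperm m g v = (v.1, v.2 * g) := rfl

@[simp] lemma LLperm_apply (f : Fin m → G) (v : Fin m × G) :
    LLperm m f v = (v.1, (f v.1)⁻¹ * v.2) := rfl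

@[simp] lemma Aperm_apply (α : MulAut G) (v : Fin m × G) : Aperm m α v = (v.1, α v.2) := rfl

lemma LLperm_mul (f f' : Fin m → G) :
    LLperm m f * LLperm m f' = LLperm m (fun i => f' i * f i) :=
  Equiv.ext fun v => by simp [mul_assoc]

lemma LLperm_inv (f : Fin m → G) : (LLperm m f)⁻¹ = LLperm m (fun i => (f i)⁻¹) :=
  Equiv.ext fun v => by simp [Equiv.Perm.inv_def, LLperm]

lemma LLperm_conj_Rperm (f : Fin m → G) (g : G) :
    LLperm m f * Rperm m g * (LLperm m f)⁻¹ = Rperm m g := by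
  rw [LLperm_inv]
  exact Equiv.ext fun v => by simp [mul_assoc]

lemma Aperm_inv (α : MulAut G) : (Aperm m α)⁻¹ = Aperm m α⁻¹ :=
  Equiv.ext fun v => by simp [Aperm, Equiv.Perm.inv_def, MulAut.inv_def]

lemma Aperm_conj_Rperm (α : MulAut G) (g : G) :
    Aperm m α * Rperm m g * (Aperm m α)⁻¹ = Rperm m (α g) := by
  rw [Aperm_inv]
  exact Equiv.ext fun v => by simp [map_mul]

lemma Aperm_conj_LLperm (α : MulAut G) (f : Fin m → G) :
    Aperm m α * LLperm m f * (Aperm m α)⁻¹ = LLperm m (fun i => α (f i)) := by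
  rw [Aperm_inv]
  exact Equiv.ext fun v => by simp [map_mul]

lemma Rperm_eq_LL_mul_A (g : G) :
    Rperm m g = LLperm m (fun _ => g⁻¹) * Aperm m (MulAut.conj g⁻¹) :=
  Equiv.ext fun v => by
    simp [MulAut.conj, mul_assoc]

lemma LLperm_const_eq (c : G) :
    LLperm m (fun _ => c) = Rperm m c⁻¹ * (Aperm m (MulAut.conj c))⁻¹ := by
  have := Rperm_eq_LL_mul_A (m := m) (g := c⁻¹)
  simp only [inv_inv] at this
  rw [this, mul_inv_cancel_right]

variable [Finite G]

lemma LL_le_norm : LL m G ≤ Subgroup.normalizer (RG m G) := by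
  rintro _ ⟨f, rfl⟩
  refine Subgroup.mem_normalizer_fintype ?_
  rintro _ ⟨g, rfl⟩
  exact ⟨g, LLperm_conj_Rperm f g⟩

lemma Asub_le_norm : Asub m G ≤ Subgroup.normalizer (RG m G) := by
  rintro _ ⟨α, rfl⟩
  refine Subgroup.mem_normalizer_fintype ?_
  rintro _ ⟨g, rfl⟩
  exact ⟨α g, Aperm_conj_Rperm α g⟩

lemma RG_le_norm : RG m G ≤ Subgroup.normalizer (RG m G) :=
  Subgroup.le_normalizer

lemma LL_le_blockKer : LL m G ≤ blockKer m G := by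
  rintro _ ⟨f, rfl⟩ v; rfl

lemma Asub_le_blockKer : Asub m G ≤ blockKer m G := by
  rintro _ ⟨α, rfl⟩ v; rfl

lemma RG_le_blockKer : RG m G ≤ blockKer m G := by
  rintro _ ⟨g, rfl⟩ v; rfl

lemma sup_le_K : LL m G ⊔ Asub m G ≤ Subgroup.normalizer (RG m G) ⊓ blockKer m G := by
  refine sup_le (le_inf LL_le_norm LL_le_blockKer) (le_inf Asub_le_norm Asub_le_blockKer)

lemma K_le_sup : Subgroup.normalizer (RG m G) ⊓ blockKer m G ≤ LL m G ⊔ Asub m G := by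
  rintro σ ⟨hn, hb⟩
  rcases Nat.eq_zero_or_pos m with hm | hm
  · subst hm
    have hσ : σ = 1 := Equiv.ext fun v => Fin.elim0 v.1
    rw [hσ]; exact one_mem _
  set i0 : Fin m := ⟨0, hm⟩
  have hb' : ∀ v : Fin m × G, (σ v).1 = v.1 := hb
  have hbinv : ∀ v : Fin m × G, (σ⁻¹ v).1 = v.1 := (blockKer m G).inv_mem hb
  -- `s i x` is the image of `x` in the `i`-th copy
  set s : Fin m → G → G := fun i x => (σ (i, x)).2 with hs
  have hσv : ∀ (i : Fin m) (x : G), σ (i, x) = (i, s i x) := fun i x =>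
    Prod.ext (hb' (i, x)) rfl
  have key : ∀ g : G, ∃ h : G, ∀ (i : Fin m) (x : G), s i (x * g) = s i x * h := by
    intro g
    have hmem : σ * Rperm m g * σ⁻¹ ∈ RG m G :=
      (Subgroup.mem_normalizer_iff.mp hn (Rperm m g)).mp ⟨g, rfl⟩
    obtain ⟨h, hh⟩ := hmem
    refine ⟨h, fun i x => ?_⟩
    have hh' : σ * Rperm m g = Rperm m h * σ := by
      rw [← hh]; group
    have := congrArg (fun τ : Equiv.Perm (Fin m × G) => (τ (i, x)).2) hh'
    simpa [Equiv.Perm.mul_apply, hσv] using this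
  choose α hα using key
  -- `α` is a group automorphism
  have hαval : ∀ g : G, α g = (s i0 1)⁻¹ * s i0 g := fun g => by
    have := hα g i0 1
    rw [one_mul] at this
    rw [this, inv_mul_cancel_left]
  have hmul : ∀ g g' : G, α (g * g') = α g * α g' := by
    intro g g'
    have h1 : s i0 (g * g') = s i0 1 * α (g * g') := by
      have := hα (g * g') i0 1; rwa [one_mul] at this
    have h2 : s i0 (g * g') = s i0 g * α g' := hα g' i0 g
    have h3 : s i0 g = s i0 1 * α g := by
      have := hα g i0 1; rwa [one_mul] at this
    have := h1.symm.trans (h2.trans (by rw [h3, mul_assoc]))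
    exact mul_left_cancel this
  have hsbij : Function.Bijective (s i0) := by
    constructor
    · intro x y hxy
      have : σ (i0, x) = σ (i0, y) := by rw [hσv, hσv, hxy]
      exact (Prod.ext_iff.mp (σ.injective this)).2
    · intro y
      refine ⟨(σ⁻¹ (i0, y)).2, ?_⟩
      have h1 : (σ⁻¹ (i0, y)).1 = i0 := hbinv (i0, y)
      have : σ (σ⁻¹ (i0, y)) = (i0, y) := σ.apply_symm_apply _
      calc s i0 (σ⁻¹ (i0, y)).2 = (σ ((σ⁻¹ (i0, y)).1, (σ⁻¹ (i0, y)).2)).2 := by rw [h1]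
        _ = y := by rw [Prod.mk.eta, this]
  have hαbij : Function.Bijective α := by
    have : α = fun g => (s i0 1)⁻¹ * s i0 g := funext hαval
    rw [this]
    exact (Equiv.mulLeft ((s i0 1)⁻¹)).bijective.comp hsbij
  set A : MulAut G := MulEquiv.ofBijective (MonoidHom.mk' α hmul) hαbij with hA
  have hAapp : ∀ g : G, A g = α g := fun g => rfl
  set f : Fin m → G := fun i => (s i 1)⁻¹ with hf
  have hσeq : σ = LLperm m f * Aperm m A := by
    refine Equiv.ext fun v => ?_
    obtain ⟨i, x⟩ := v
    have h3 : s i x = s i 1 * α x := by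
      have := hα x i 1; rwa [one_mul] at this
    simp only [Equiv.Perm.mul_apply, Aperm_apply, LLperm_apply, hAapp, hf, inv_inv]
    rw [hσv, h3]
  rw [hσeq]
  exact mul_mem ((le_sup_left : LL m G ≤ _) ⟨f, rfl⟩)
    ((le_sup_right : Asub m G ≤ _) ⟨A, rfl⟩)

lemma main_eq : Subgroup.normalizer (RG m G) ⊓ blockKer m G = LL m G ⊔ Asub m G :=
  le_antisymm K_le_sup sup_le_K

lemma RG_le_sup : RG m G ≤ LL m G ⊔ Asub m G := by
  rintro _ ⟨g, rfl⟩
  rw [Rperm_eq_LL_mul_A]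
  exact mul_mem ((le_sup_left : LL m G ≤ _) ⟨_, rfl⟩)
    ((le_sup_right : Asub m G ≤ _) ⟨_, rfl⟩)

lemma LL_le_triple (r : Fin m) : LL m G ≤ (Lnot m G r ⊔ RG m G) ⊔ Asub m G := by
  rintro _ ⟨f, rfl⟩
  have hdec : LLperm m f = LLperm m (fun i => (f r)⁻¹ * f i) * LLperm m (fun _ => f r) := by
    rw [LLperm_mul]
    congr 1
    funext i
    rw [mul_inv_cancel_left]
  rw [hdec, LLperm_const_eq]
  refine mul_mem ?_ (mul_mem ?_ ?_)
  · exact (le_sup_left.trans le_sup_left : Lnot m G r ≤ _) ⟨_, by simp, rfl⟩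
  · exact (le_sup_right.trans le_sup_left : RG m G ≤ _) ⟨_, rfl⟩
  · exact inv_mem ((le_sup_right : Asub m G ≤ _) ⟨_, rfl⟩)

lemma Lnot_le_LL (r : Fin m) : Lnot m G r ≤ LL m G := by
  rintro _ ⟨f, _, rfl⟩; exact ⟨f, rfl⟩

end Aux

/-- The kernel `K` of the action of `N = N_{Sym(V)}(R(G))` on the
orbit set `{G_1, …, G_m}` equals `L ⋊ Aut(G) = (L_1 × ⋯ × L_m) ⋊ Aut(G)`, and also
`K = (L_1 × ⋯ × L_{r-1} × R(G) × L_{r+1} × ⋯ × L_m) ⋊ Aut(G)` for every `r`. -/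
theorem kernel_of_N_on_blocks (G : Type*) [Group G] [Finite G] (m : ℕ) :
    Subgroup.normalizer (RG m G) ⊓ blockKer m G = LL m G ⊔ Asub m G ∧
    (∀ r : Fin m,
      Subgroup.normalizer (RG m G) ⊓ blockKer m G = (Lnot m G r ⊔ RG m G) ⊔ Asub m G) ∧
    LL m G ⊓ Asub m G = ⊥ ∧
    Asub m G ≤ Subgroup.normalizer (LL m G) := by
  refine ⟨main_eq, fun r => ?_, ?_, ?_⟩
  · rw [main_eq]
    refine le_antisymm ?_ ?_
    · exact sup_le (LL_le_triple r) le_sup_right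
    · exact sup_le (sup_le ((Lnot_le_LL r).trans le_sup_left) RG_le_sup) le_sup_right
  · refine le_antisymm ?_ bot_le
    rintro σ ⟨⟨f, rfl⟩, ⟨α, hα⟩⟩
    rw [Subgroup.mem_bot]
    refine Equiv.ext fun v => ?_
    have h1 : LLperm m f (v.1, 1) = Aperm m α (v.1, 1) := by rw [← hα]
    simp only [LLperm_apply, Aperm_apply, map_one, mul_one] at h1
    have hfv : f v.1 = 1 := by
      have := (Prod.ext_iff.mp h1).2
      rwa [inv_eq_one] at this
    simp [hfv]
  · rintro _ ⟨α, rfl⟩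
    refine Subgroup.mem_normalizer_fintype ?_
    rintro _ ⟨f, rfl⟩
    exact ⟨fun i => α (f i), Aperm_conj_LLperm α f⟩
end

section
/- Let Γ be an m-Cayley digraph Cay(G, S_{i,j} : 1 ≤ i,j ≤ m) of a finite group G, with vertex set V = ∪_{i=1}^m G_i and arcs (x_i, (sx)_j) for s ∈ S_{i,j}. An element n = L_1(g_1)⋯L_m(g_m)·α·σ of the normalizer N of R(G) in Sym(V) (with g_i ∈ G, α ∈ Aut(G), σ ∈ S_m) is an automorphism of Γ if and only if S_{i^σ, j^σ} = (g_j⁻¹ S_{i,j} g_i)^α for all 1 ≤ i,j ≤ m. -/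
/-- `L_i(g) : x_i ↦ (g⁻¹x)_i`, fixing the other copies pointwise. -/
def Lperm (m : ℕ) {G : Type*} [Group G] (i : Fin m) (g : G) : Equiv.Perm (Fin m × G) :=
  LLperm m (fun j => if j = i then g else 1)

/-- `S_m` acting on `V` by permuting the indices: `σ : x_i ↦ x_{σ(i)}`. -/
def Pperm (m : ℕ) (G : Type*) [Group G] (σ : Equiv.Perm (Fin m)) :
    Equiv.Perm (Fin m × G) :=
  Equiv.prodCongr σ (Equiv.refl G)

/-- The arc relation of the `m`-Cayley digraph `Cay(G, S_{i,j})`: there is an arc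
from `x_i` to `(sx)_j` for each `s ∈ S_{i,j}`. -/
def arcRel (m : ℕ) {G : Type*} [Group G] (S : Fin m → Fin m → Set G)
    (u v : Fin m × G) : Prop :=
  v.2 * u.2⁻¹ ∈ S u.1 v.1

/-- An element `n = L_1(g_1) ⋯ L_m(g_m) · α · σ` of the
normalizer of `R(G)` in `Sym(V)` is an automorphism of the `m`-Cayley digraph
`Cay(G, S_{i,j})` if and only if `S_{σ(i), σ(j)} = (g_j⁻¹ S_{i,j} g_i)^α` for all
`i, j`. -/
theorem normalizer_element_is_automorphism_iff (G : Type*) [Group G] (m : ℕ)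
    (S : Fin m → Fin m → Set G) (hS : ∀ i, (1 : G) ∉ S i i)
    (f : Fin m → G) (α : MulAut G) (σ : Equiv.Perm (Fin m)) :
    (∀ u v : Fin m × G,
        arcRel m S ((Pperm m G σ * Aperm m α * LLperm m f) u)
          ((Pperm m G σ * Aperm m α * LLperm m f) v) ↔ arcRel m S u v) ↔
      ∀ i j : Fin m,
        S (σ i) (σ j) = (fun s => α ((f j)⁻¹ * s * f i)) '' S i j := by
  have key : ∀ (i j : Fin m) (x y : G),
      (arcRel m S ((Pperm m G σ * Aperm m α * LLperm m f) (i, x))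
        ((Pperm m G σ * Aperm m α * LLperm m f) (j, y))) ↔
      α ((f j)⁻¹ * (y * x⁻¹) * f i) ∈ S (σ i) (σ j) := by
    intro i j x y
    have : (α ((f j)⁻¹ * y)) * (α ((f i)⁻¹ * x))⁻¹ = α ((f j)⁻¹ * (y * x⁻¹) * f i) := by
      rw [← map_inv, ← map_mul]
      group
    simp [arcRel, Pperm, Aperm, LLperm, Equiv.prodCongr, this, mul_assoc]
  constructor
  · intro h i j
    ext t
    constructor
    · intro ht
      refine ⟨f j * α.symm t * (f i)⁻¹, ?_, ?_⟩
      · have := (h (i, 1) (j, f j * α.symm t * (f i)⁻¹))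
        rw [key] at this
        have h2 : α ((f j)⁻¹ * (f j * α.symm t * (f i)⁻¹ * 1⁻¹) * f i) = t := by
          simp [mul_assoc]
        rw [h2] at this
        simpa [arcRel] using this.mp ht
      · simp [mul_assoc]
    · rintro ⟨s, hs, rfl⟩
      have := (h (i, 1) (j, s))
      rw [key] at this
      simpa [arcRel] using this.mpr (by simpa [arcRel] using hs)
  · intro h u v
    obtain ⟨i, x⟩ := u
    obtain ⟨j, y⟩ := v
    rw [key, h i j]
    constructor
    · rintro ⟨s, hs, he⟩
      have : s = y * x⁻¹ := by
        have := α.injective he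
        have := mul_left_cancel ((mul_right_cancel this))
        exact this
      simpa [arcRel, ← this]
    · intro hv
      exact ⟨y * x⁻¹, hv, rfl⟩
end

section
/- Let m ≥ 2 and let Γ be an m-PCayley digraph of a finite group G such that both Γ and its multipartite complement Γ^{mc} are disconnected. Then m = 2, |G| is even, and Γ is isomorphic to the disjoint union of two complete bipartite graphs K_{|G|/2, |G|/2}. -/
/-- The multipartite complement of an `m`-PCayley digraph: replace each `S_{i,j}`
(`i ≠ j`) by its complement `G \\ S_{i,j}`, keeping the diagonal sets empty. -/
def mcCompl (m : ℕ) {G : Type*} [Group G] (S : Fin m → Fin m → Set G) :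
    Fin m → Fin m → Set G :=
  fun i j => if i = j then (∅ : Set G) else (S i j)ᶜ

/-- The underlying (simple) graph of the `m`-Cayley digraph `Cay(G, S_{i,j})`. -/
def toGraph (m : ℕ) (G : Type*) [Group G] (S : Fin m → Fin m → Set G) :
    SimpleGraph (Fin m × G) where
  Adj u v := u ≠ v ∧ (arcRel m S u v ∨ arcRel m S v u)
  symm := ⟨fun u v h => ⟨h.1.symm, h.2.symm⟩⟩
  loopless := ⟨fun v h => h.1 rfl⟩

/-- The disjoint union of two copies of the complete bipartite graph `K_{k,k}`. -/
def twoCompleteBipartite (k : ℕ) : SimpleGraph (Fin 2 × Fin 2 × Fin k) where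
  Adj u v := u.1 = v.1 ∧ u.2.1 ≠ v.2.1
  symm := ⟨fun u v h => ⟨h.1.symm, h.2.symm⟩⟩
  loopless := ⟨fun v h => h.2 rfl⟩

/-!
Right translations are automorphisms of `Cay(G, S)`, so the vertices of part `j` reachable
from `(i, 1)` form a set `A i j ⊆ G`; `A i i` is a subgroup `H i` and every nonempty `A i j` is
a left coset of it. An arc between distinct parts that is missing from `Γ` lies in `Γ^{mc}`, so
`A i j ∪ A^{mc} i j = G` for `i ≠ j`. If some `A i j` with `i ≠ j` were empty, `Γ^{mc}` would
be connected, so all these cosets are nonempty and disconnectedness makes `H i` and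
`H^{mc} i` proper. Counting then gives `|H i| = |G| / 2` and `A^{mc} i j = G \ A i j`.
A third part is impossible, since `A 1 2 * A 0 1 ⊆ A 0 2` and the same for the complements
contradict these cardinalities. With two parts, the index-two subgroup `H 0` splits `Γ` into
two components, and every pair of vertices in distinct parts of one component is adjacent.
-/

open SimpleGraph Set Pointwise

theorem SimpleGraph.connected_of_not_reachable_between_parts {V P : Type*}
    {Γ Γ' : SimpleGraph V} (π : V → P)
    (hcover : ∀ u v, π u ≠ π v → ¬Γ.Reachable u v → Γ'.Adj u v)
    {x y : V} (hxy : π x ≠ π y)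
    (hsep : ∀ u v, π u = π x → π v = π y → ¬Γ.Reachable u v) : Γ'.Connected := by
  have hadj : Γ'.Adj x y := hcover x y hxy (hsep x y rfl rfl)
  have hreach : ∀ w, Γ'.Reachable w x := by
    intro w
    by_cases hwy : π w ≠ π y ∧ ¬Γ.Reachable w y
    · exact (hcover w y hwy.1 hwy.2).reachable.trans hadj.symm.reachable
    · refine (hcover w x (fun h => hwy ⟨h ▸ hxy, hsep w y h rfl⟩)
        fun hr => hwy ⟨?_, ?_⟩).reachable
      · exact fun h => hsep x w rfl h hr.symm
      · exact fun h => hsep x y rfl rfl (hr.symm.trans h)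
  exact (connected_iff _).2 ⟨fun u v => (hreach u).trans (hreach v).symm, ⟨x⟩⟩

theorem Subgroup.two_mul_card_le_of_ne_top {G : Type*} [Group G] [Finite G] {H : Subgroup G}
    (hH : H ≠ ⊤) : 2 * Nat.card H ≤ Nat.card G := by
  rw [← H.card_mul_index, mul_comm]
  exact Nat.mul_le_mul_left _ (H.one_lt_index_of_ne_top hH)

theorem Set.eq_univ_of_mul_mem_of_mul_notMem {G : Type*} [Group G] [Finite G] {X Y Z : Set G}
    (hmem : ∀ x ∈ X, ∀ y ∈ Y, x * y ∈ Z) (hnotMem : ∀ x ∉ X, ∀ y ∉ Y, x * y ∉ Z)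
    (hX : X.Nonempty) (hXZ : X.ncard = Z.ncard) (hYZ : Y.ncard = Z.ncard) : Y = univ := by
  obtain ⟨x, hx⟩ := hX
  by_contra hY
  obtain ⟨y, hy⟩ := (ne_univ_iff_exists_notMem _).1 hY
  have hxY : (x * ·) '' Y = Z := eq_of_subset_of_ncard_le
    (by rintro _ ⟨b, hb, rfl⟩; exact hmem x hx b hb)
    (by rw [ncard_image_of_injective _ (mul_right_injective x), hYZ]) (toFinite Z)
  have hZy : (· * y⁻¹) '' Z = X := eq_of_subset_of_ncard_le
    (by rintro _ ⟨z, hz, rfl⟩; by_contra h; exact hnotMem _ h y hy (by simpa using hz))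
    (by rw [ncard_image_of_injective _ (mul_left_injective _), hXZ]) (toFinite X)
  have hxy : x * y ∈ Z := by
    rw [← hZy] at hx
    obtain ⟨z, hz, rfl⟩ := hx
    simpa using hz
  rw [← hxY] at hxy
  obtain ⟨b, hb, hbxy⟩ := hxy
  exact hy (mul_left_cancel hbxy ▸ hb)

theorem nonempty_iso_twoCompleteBipartite {α : Type*} [Finite α] (Γ : SimpleGraph (Fin 2 × α))
    (C : Fin 2 → Set α) {k : ℕ} (hC : ∀ i, (C i).ncard = k) (hCc : ∀ i, (C i)ᶜ.ncard = k)
    (hadj : ∀ i j x y, Γ.Adj (i, x) (j, y) ↔ (x ∈ C i ↔ y ∈ C j) ∧ i ≠ j) :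
    Nonempty (Γ ≃g twoCompleteBipartite k) := by
  classical
  let e : Fin 2 → α ≃ Fin 2 × Fin k := fun i =>
    (Equiv.Set.sumCompl (C i)).symm.trans <|
      (Equiv.sumCongr (Finite.equivFinOfCardEq ((Nat.card_coe_set_eq _).trans (hC i)))
        (Finite.equivFinOfCardEq ((Nat.card_coe_set_eq _).trans (hCc i)))).trans <|
      (Equiv.boolProdEquivSum (Fin k)).symm.trans (finTwoEquiv.symm.prodCongr (Equiv.refl _))
  have he : ∀ i x, (e i x).1 = 0 ↔ x ∈ C i := by
    intro i x
    by_cases hx : x ∈ C i <;>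
      simp [e, hx, Equiv.Set.sumCompl_symm_apply_of_mem,
        Equiv.Set.sumCompl_symm_apply_of_notMem] <;> decide
  let f : Fin 2 × α ≃ Fin 2 × Fin 2 × Fin k :=
    { toFun u := ((e u.1 u.2).1, u.1, (e u.1 u.2).2)
      invFun v := (v.2.1, (e v.2.1).symm (v.1, v.2.2))
      left_inv u := by simp
      right_inv v := by simp }
  refine ⟨⟨f, ?_⟩⟩
  rintro ⟨i, x⟩ ⟨j, y⟩
  have hfin : ∀ a b : Fin 2, a = b ↔ (a = 0 ↔ b = 0) := by decide
  change ((e i x).1 = (e j y).1 ∧ i ≠ j) ↔ Γ.Adj (i, x) (j, y)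
  rw [hadj, hfin, he, he]

namespace PCayley

-- Abstracts the pair `(S, mcCompl m S)`, so that every lemma below applies to `Γ` and `Γ^{mc}`.
def CoversCross {m : ℕ} {α : Type*} (S T : Fin m → Fin m → Set α) : Prop :=
  ∀ i j, i ≠ j → S i j ∪ T i j = univ

theorem CoversCross.symm {m : ℕ} {α : Type*} {S T : Fin m → Fin m → Set α}
    (hST : CoversCross S T) : CoversCross T S :=
  fun i j hij => union_comm (T i j) (S i j) ▸ hST i j hij

variable {m : ℕ} {G : Type*} [Group G]

def mulRightHom (S : Fin m → Fin m → Set G) (g : G) : toGraph m G S →g toGraph m G S where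
  toFun u := (u.1, u.2 * g)
  map_rel' := by
    rintro ⟨i, x⟩ ⟨j, y⟩ ⟨hne, harc⟩
    refine ⟨fun h => hne ?_, ?_⟩
    · simpa using h
    · simpa [arcRel, mul_assoc] using harc

variable {S T : Fin m → Fin m → Set G}

theorem reachable_mul_right {i j : Fin m} {x y : G} (g : G)
    (h : (toGraph m G S).Reachable (i, x) (j, y)) :
    (toGraph m G S).Reachable (i, x * g) (j, y * g) :=
  h.map (mulRightHom S g)

variable (S) in
def reachSet (i j : Fin m) : Set G :=
  {g | (toGraph m G S).Reachable (i, 1) (j, g)}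

theorem reachable_iff_mem_reachSet {i j : Fin m} {x y : G} :
    (toGraph m G S).Reachable (i, x) (j, y) ↔ y * x⁻¹ ∈ reachSet S i j :=
  ⟨fun h => by simpa [reachSet] using reachable_mul_right x⁻¹ h,
    fun h => by simpa using reachable_mul_right x h⟩

theorem one_mem_reachSet (i : Fin m) : (1 : G) ∈ reachSet S i i :=
  Reachable.refl _

theorem mul_mem_reachSet {i j k : Fin m} {a b : G} (ha : a ∈ reachSet S i j)
    (hb : b ∈ reachSet S j k) : b * a ∈ reachSet S i k :=
  ha.trans (by simpa using reachable_mul_right a hb)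

theorem inv_mem_reachSet {i j : Fin m} {a : G} (ha : a ∈ reachSet S i j) :
    a⁻¹ ∈ reachSet S j i := by
  simpa [reachSet] using reachable_mul_right a⁻¹ ha.symm

variable (S) in
def reachSubgroup (i : Fin m) : Subgroup G where
  carrier := reachSet S i i
  one_mem' := one_mem_reachSet i
  mul_mem' hx hy := mul_mem_reachSet hy hx
  inv_mem' := inv_mem_reachSet

theorem reachSet_eq_smul {i j : Fin m} {a : G} (ha : a ∈ reachSet S i j) :
    reachSet S i j = a • (reachSubgroup S i : Set G) := by
  ext b
  rw [mem_leftCoset_iff]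
  exact ⟨fun hb => mul_mem_reachSet hb (inv_mem_reachSet ha),
    fun hb => by simpa using mul_mem_reachSet hb ha⟩

theorem ncard_reachSet {i j : Fin m} (hne : (reachSet S i j).Nonempty) :
    (reachSet S i j).ncard = Nat.card (reachSubgroup S i) := by
  obtain ⟨a, ha⟩ := hne
  rw [reachSet_eq_smul ha, ncard_smul_set]
  rfl

theorem connected_of_reachSubgroup_eq_top {i : Fin m} (hne : ∀ j, (reachSet S i j).Nonempty)
    (htop : reachSubgroup S i = ⊤) : (toGraph m G S).Connected := by
  have hreach : ∀ u : Fin m × G, (toGraph m G S).Reachable (i, 1) u := by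
    rintro ⟨j, g⟩
    obtain ⟨a, ha⟩ := hne j
    change g ∈ reachSet S i j
    rw [reachSet_eq_smul ha, htop, Subgroup.coe_top, smul_set_univ]
    trivial
  exact (connected_iff _).2 ⟨fun u v => (hreach u).symm.trans (hreach v), ⟨(i, 1)⟩⟩

theorem not_adj_of_fst_eq {i : Fin m} (hS : S i i = ∅) {x y : G} :
    ¬(toGraph m G S).Adj (i, x) (i, y) := by
  rintro ⟨-, h | h⟩ <;> simp [arcRel, hS] at h

theorem coversCross_mcCompl (S : Fin m → Fin m → Set G) : CoversCross S (mcCompl m S) :=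
  fun i j hij => by simp [mcCompl, hij]

theorem adj_of_not_adj (hST : CoversCross S T) {i j : Fin m} (hij : i ≠ j) {x y : G}
    (h : ¬(toGraph m G S).Adj (i, x) (j, y)) : (toGraph m G T).Adj (i, x) (j, y) := by
  have hne : ((i, x) : Fin m × G) ≠ (j, y) := fun e => hij (congrArg Prod.fst e)
  have hmem : y * x⁻¹ ∈ S i j ∪ T i j := by rw [hST i j hij]; trivial
  exact ⟨hne, Or.inl (hmem.resolve_left fun hs => h ⟨hne, Or.inl hs⟩)⟩

theorem connected_of_reachSet_eq_empty (hST : CoversCross S T) {p q : Fin m} (hpq : p ≠ q)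
    (h : reachSet S p q = ∅) : (toGraph m G T).Connected :=
  connected_of_not_reachable_between_parts Prod.fst
    (fun _ _ huv hr => adj_of_not_adj hST huv fun ha => hr ha.reachable)
    (x := (p, 1)) (y := (q, 1)) hpq (by
      rintro ⟨i, x⟩ ⟨j, y⟩ rfl rfl hr
      simpa [h] using reachable_iff_mem_reachSet.1 hr)

theorem reachSet_nonempty (hST : CoversCross S T) (hTc : ¬(toGraph m G T).Connected)
    (i j : Fin m) : (reachSet S i j).Nonempty := by
  rcases eq_or_ne i j with rfl | hij
  · exact ⟨1, one_mem_reachSet i⟩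
  · exact nonempty_iff_ne_empty.2 fun h => hTc (connected_of_reachSet_eq_empty hST hij h)

theorem reachSubgroup_ne_top (hST : CoversCross S T) (hSc : ¬(toGraph m G S).Connected)
    (hTc : ¬(toGraph m G T).Connected) (i : Fin m) : reachSubgroup S i ≠ ⊤ :=
  fun htop => hSc (connected_of_reachSubgroup_eq_top (reachSet_nonempty hST hTc i) htop)

theorem reachSet_union_reachSet (hST : CoversCross S T) {i j : Fin m} (hij : i ≠ j) :
    reachSet S i j ∪ reachSet T i j = univ := by
  refine eq_univ_of_forall fun g => ?_
  by_cases hg : g ∈ reachSet S i j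
  · exact Or.inl hg
  · exact Or.inr (adj_of_not_adj hST hij fun h => hg h.reachable).reachable

theorem reachable_iff_of_index_eq_two {p : Fin m} (hne : ∀ j, (reachSet S p j).Nonempty)
    (h2 : (reachSubgroup S p).index = 2) (u v : Fin m × G) :
    (toGraph m G S).Reachable u v ↔
      ((toGraph m G S).Reachable (p, 1) u ↔ (toGraph m G S).Reachable (p, 1) v) := by
  have hpart : ∀ w : Fin m × G, ∃ g, (toGraph m G S).Reachable w (p, g) := by
    rintro ⟨i, x⟩
    obtain ⟨a, ha⟩ := hne i
    exact ⟨a⁻¹ * x, reachable_iff_mem_reachSet.2 (by simpa using inv_mem_reachSet ha)⟩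
  obtain ⟨g, hug⟩ := hpart u
  obtain ⟨g', hvg'⟩ := hpart v
  have hu : (toGraph m G S).Reachable (p, 1) u ↔ g ∈ reachSubgroup S p :=
    ⟨fun h => h.trans hug, fun h => h.trans hug.symm⟩
  have hv : (toGraph m G S).Reachable (p, 1) v ↔ g' ∈ reachSubgroup S p :=
    ⟨fun h => h.trans hvg', fun h => h.trans hvg'.symm⟩
  calc (toGraph m G S).Reachable u v ↔ (toGraph m G S).Reachable (p, g) (p, g') :=
        ⟨fun h => hug.symm.trans (h.trans hvg'), fun h => hug.trans (h.trans hvg'.symm)⟩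
    _ ↔ g' * g⁻¹ ∈ reachSubgroup S p := reachable_iff_mem_reachSet
    _ ↔ (g ∈ reachSubgroup S p ↔ g' ∈ reachSubgroup S p) := by
        rw [Subgroup.mul_mem_iff_of_index_two h2, inv_mem_iff]
        exact iff_comm
    _ ↔ _ := by rw [hu, hv]

section Finite

variable [Finite G]

theorem two_mul_card_reachSubgroup (hST : CoversCross S T) (hSc : ¬(toGraph m G S).Connected)
    (hTc : ¬(toGraph m G T).Connected) {i j : Fin m} (hij : i ≠ j) :
    2 * Nat.card (reachSubgroup S i) = Nat.card G := by
  have hU := ncard_union_le (reachSet S i j) (reachSet T i j)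
  rw [reachSet_union_reachSet hST hij, ncard_univ, ncard_reachSet (reachSet_nonempty hST hTc i j),
    ncard_reachSet (reachSet_nonempty hST.symm hSc i j)] at hU
  have hSi := Subgroup.two_mul_card_le_of_ne_top (reachSubgroup_ne_top hST hSc hTc i)
  have hTi := Subgroup.two_mul_card_le_of_ne_top (reachSubgroup_ne_top hST.symm hTc hSc i)
  omega

theorem reachSet_eq_compl (hST : CoversCross S T) (hSc : ¬(toGraph m G S).Connected)
    (hTc : ¬(toGraph m G T).Connected) {i j : Fin m} (hij : i ≠ j) :
    reachSet T i j = (reachSet S i j)ᶜ := by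
  have hSi := two_mul_card_reachSubgroup hST hSc hTc hij
  have hTi := two_mul_card_reachSubgroup hST.symm hTc hSc hij
  have hU := ncard_union_add_ncard_inter (reachSet S i j) (reachSet T i j)
  rw [reachSet_union_reachSet hST hij, ncard_univ, ncard_reachSet (reachSet_nonempty hST hTc i j),
    ncard_reachSet (reachSet_nonempty hST.symm hSc i j)] at hU
  have hI : reachSet S i j ∩ reachSet T i j = ∅ := (ncard_eq_zero (toFinite _)).1 (by omega)
  exact (IsCompl.of_eq hI (reachSet_union_reachSet hST hij)).compl_eq.symm

theorem index_reachSubgroup_eq_two (hST : CoversCross S T) (hSc : ¬(toGraph m G S).Connected)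
    (hTc : ¬(toGraph m G T).Connected) {i j : Fin m} (hij : i ≠ j) :
    (reachSubgroup S i).index = 2 := by
  refine Nat.eq_of_mul_eq_mul_left (Nat.card_pos (α := reachSubgroup S i)) ?_
  rw [(reachSubgroup S i).card_mul_index, ← two_mul_card_reachSubgroup hST hSc hTc hij, mul_comm]

theorem le_two_of_not_connected (hST : CoversCross S T) (hSc : ¬(toGraph m G S).Connected)
    (hTc : ¬(toGraph m G T).Connected) : m ≤ 2 := by
  by_contra! hm
  let p : Fin m := ⟨0, by omega⟩
  let q : Fin m := ⟨1, by omega⟩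
  let r : Fin m := ⟨2, by omega⟩
  have hpq : p ≠ q := by simp [p, q, Fin.ext_iff]
  have hqr : q ≠ r := by simp [q, r, Fin.ext_iff]
  have hpr : p ≠ r := by simp [p, r, Fin.ext_iff]
  have hcard : ∀ {i j : Fin m}, i ≠ j → (reachSet S i j).ncard = Nat.card G / 2 := by
    intro i j hij
    rw [ncard_reachSet (reachSet_nonempty hST hTc i j),
      ← two_mul_card_reachSubgroup hST hSc hTc hij]
    omega
  have hcompl : ∀ {i j}, i ≠ j → ∀ g, g ∉ reachSet S i j ↔ g ∈ reachSet T i j := by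
    intro i j hij g
    rw [reachSet_eq_compl hST hSc hTc hij]
    rfl
  have huniv : reachSet S p q = univ := eq_univ_of_mul_mem_of_mul_notMem
    (X := reachSet S q r) (Z := reachSet S p r)
    (fun x hx y hy => mul_mem_reachSet hy hx)
    (fun x hx y hy =>
      (hcompl hpr _).2 (mul_mem_reachSet ((hcompl hpq y).1 hy) ((hcompl hqr x).1 hx)))
    (reachSet_nonempty hST hTc q r) (by rw [hcard hqr, hcard hpr]) (by rw [hcard hpq, hcard hpr])
  obtain ⟨g, hg⟩ := reachSet_nonempty hST.symm hSc p q
  exact (hcompl hpq g).2 hg (huniv ▸ mem_univ g)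

theorem adj_iff_of_not_connected (hS : ∀ i, S i i = ∅) (hST : CoversCross S T)
    (hSc : ¬(toGraph m G S).Connected) (hTc : ¬(toGraph m G T).Connected)
    {p q : Fin m} (hpq : p ≠ q) {i j : Fin m} {x y : G} :
    (toGraph m G S).Adj (i, x) (j, y) ↔
      ((toGraph m G S).Reachable (p, 1) (i, x) ↔ (toGraph m G S).Reachable (p, 1) (j, y)) ∧
        i ≠ j := by
  rcases eq_or_ne i j with rfl | hij
  · simp [not_adj_of_fst_eq (hS i)]
  have hadj : (toGraph m G S).Adj (i, x) (j, y) ↔ (toGraph m G S).Reachable (i, x) (j, y) := by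
    refine ⟨Adj.reachable, fun h => by_contra fun hn => ?_⟩
    have hTc' := reachable_iff_mem_reachSet.1 (adj_of_not_adj hST hij hn).reachable
    rw [reachSet_eq_compl hST hSc hTc hij] at hTc'
    exact hTc' (reachable_iff_mem_reachSet.1 h)
  rw [hadj, reachable_iff_of_index_eq_two (reachSet_nonempty hST hTc p)
    (index_reachSubgroup_eq_two hST hSc hTc hpq)]
  simp [hij]

end Finite

end PCayley

open PCayley in
/-- If `m ≥ 2` and both an `m`-PCayley digraph `Γ` of a finite
group `G` and its multipartite complement `Γ^{mc}` are disconnected (as underlying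
graphs), then `m = 2`, `|G|` is even, and `Γ` is isomorphic to the disjoint union
of two complete bipartite graphs `K_{|G|/2, |G|/2}`. -/
theorem disconnected_both (G : Type*) [Group G] [Finite G] (m : ℕ) (hm : 2 ≤ m)
    (S : Fin m → Fin m → Set G) (hS : ∀ i, S i i = (∅ : Set G))
    (h1 : ¬ (toGraph m G S).Connected)
    (h2 : ¬ (toGraph m G (mcCompl m S)).Connected) :
    m = 2 ∧ Even (Nat.card G) ∧
      Nonempty (toGraph m G S ≃g twoCompleteBipartite (Nat.card G / 2)) := by
  have hcov := coversCross_mcCompl S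
  obtain rfl : m = 2 := le_antisymm (le_two_of_not_connected hcov h1 h2) hm
  have h01 : (0 : Fin 2) ≠ 1 := by decide
  have hcard := two_mul_card_reachSubgroup hcov h1 h2 h01
  have hC : ∀ i, (reachSet S 0 i).ncard = Nat.card G / 2 := fun i => by
    rw [ncard_reachSet (reachSet_nonempty hcov h2 0 i)]
    omega
  refine ⟨rfl, ⟨_, hcard.symm.trans (two_mul _)⟩, ?_⟩
  refine nonempty_iso_twoCompleteBipartite _ (reachSet S 0) hC (fun i => ?_)
    fun _ _ _ _ => adj_iff_of_not_connected hS hcov h1 h2 h01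
  have := ncard_add_ncard_compl (reachSet S 0 i)
  rw [hC] at this
  omega
end

section
/- Let M be a transitive permutation group of degree 6 containing a regular dihedral subgroup of order 6, and suppose the order of a Sylow 3-subgroup of M is 3. Then all regular dihedral subgroups of order 6 of M are conjugate in M. -/
/-!
The rotation subgroups `P₁ ≤ D₁` and `P₂ ≤ D₂` have order 3, so they are Sylow 3-subgroups
of `M` and some `g ∈ M` conjugates `P₁` onto `P₂`. It then suffices that a regular dihedral
group is determined by its rotation subgroup `P`. Let `D` be transitive and `E` semiregular,
both dihedral over `P`. A reflection `s ∈ E` agrees at some point `x` with some `d ∈ D`, which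
cannot be a rotation because `E` is semiregular. Two involutions inverting `P` that agree at `x`
agree on every `D`-translate of `x`, so `s = d ∈ D`.
-/

open Equiv

/-- `D` is a generalized dihedral group over its subgroup `P` of index at most two. -/
structure Subgroup.IsDihedralOver {G : Type*} [Group G] (P D : Subgroup G) : Prop where
  le : P ≤ D
  mul_mem_of_notMem : ∀ a ∈ D, ∀ b ∈ D, a ∉ P → b ∉ P → a * b ∈ P
  mul_self_of_notMem : ∀ a ∈ D, a ∉ P → a * a = 1

namespace Subgroup.IsDihedralOver

variable {G : Type*} [Group G] {P D : Subgroup G}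

theorem mul_mul_self_eq_inv (h : P.IsDihedralOver D) {a q : G} (ha : a ∈ D) (haP : a ∉ P)
    (hq : q ∈ P) : a * q * a = q⁻¹ := by
  have haq : a * q ∉ P := fun h' => haP (by simpa using P.mul_mem h' (P.inv_mem hq))
  have := h.mul_self_of_notMem (a * q) (D.mul_mem ha (h.le hq)) haq
  exact eq_inv_of_mul_eq_one_left (by simpa only [mul_assoc] using this)

theorem map {H : Type*} [Group H] (h : P.IsDihedralOver D) {f : G →* H}
    (hf : Function.Injective f) : (P.map f).IsDihedralOver (D.map f) where
  le := Subgroup.map_mono h.le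
  mul_mem_of_notMem := by
    rintro _ ⟨a, ha, rfl⟩ _ ⟨b, hb, rfl⟩ haP hbP
    rw [Subgroup.mem_map_iff_mem hf] at haP hbP
    simpa only [map_mul] using Subgroup.mem_map_of_mem f (h.mul_mem_of_notMem a ha b hb haP hbP)
  mul_self_of_notMem := by
    rintro _ ⟨a, ha, rfl⟩ haP
    rw [Subgroup.mem_map_iff_mem hf] at haP
    rw [← map_mul, h.mul_self_of_notMem a ha haP, map_one]

end Subgroup.IsDihedralOver

namespace DihedralGroup

theorem r_mem_zpowers_r_one {n : ℕ} (i : ZMod n) : r i ∈ Subgroup.zpowers (r 1) :=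
  ⟨i.cast, by simp only [r_one_zpow, ZMod.intCast_zmod_cast]⟩

theorem isDihedralOver_zpowers_r_one (n : ℕ) :
    (Subgroup.zpowers (r 1)).IsDihedralOver (⊤ : Subgroup (DihedralGroup n)) where
  le := le_top
  mul_mem_of_notMem := by
    rintro (i | i) - (j | j) - hi hj
    · exact absurd (r_mem_zpowers_r_one i) hi
    · exact absurd (r_mem_zpowers_r_one i) hi
    · exact absurd (r_mem_zpowers_r_one j) hj
    · rw [sr_mul_sr]
      exact r_mem_zpowers_r_one _
  mul_self_of_notMem := by
    rintro (i | i) - hi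
    · exact absurd (r_mem_zpowers_r_one i) hi
    · exact sr_mul_self i

end DihedralGroup

theorem Subgroup.exists_isDihedralOver_of_mulEquiv {G : Type*} [Group G] {D : Subgroup G}
    {n : ℕ} (e : D ≃* DihedralGroup n) :
    ∃ P : Subgroup G, P.IsDihedralOver D ∧ Nat.card P = n := by
  set f : DihedralGroup n →* G := D.subtype.comp e.symm.toMonoidHom
  have hf : Function.Injective f := D.subtype_injective.comp e.symm.injective
  have hD : (⊤ : Subgroup (DihedralGroup n)).map f = D := by
    rw [← MonoidHom.range_eq_map, MonoidHom.range_comp,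
      MonoidHom.range_eq_top.mpr e.symm.surjective, ← MonoidHom.range_eq_map,
      Subgroup.range_subtype]
  refine ⟨_, hD ▸ (DihedralGroup.isDihedralOver_zpowers_r_one n).map hf, ?_⟩
  rw [Subgroup.card_map_of_injective hf, Nat.card_zpowers, DihedralGroup.orderOf_r_one]

theorem Equiv.Perm.apply_apply_eq_of_mul_mul_self_eq_inv {α : Type*} {s q : Perm α}
    (hs : s * s = 1) (hsq : s * q * s = q⁻¹) (x : α) : s (q x) = q⁻¹ (s x) := by
  rw [← hsq, Perm.mul_apply, Perm.mul_apply, ← Perm.mul_apply s s, hs, Perm.one_apply]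

namespace Subgroup.IsDihedralOver

variable {α : Type*} {P D : Subgroup (Perm α)}

theorem eq_of_apply_eq (hD : P.IsDihedralOver D) (htrans : ∀ a b : α, ∃ g ∈ D, g a = b)
    {s d : Perm α} (hd : d ∈ D) (hdP : d ∉ P) (hs : s * s = 1)
    (hsP : ∀ q ∈ P, s * q * s = q⁻¹) {x : α} (hx : s x = d x) : s = d := by
  have hdd := hD.mul_self_of_notMem d hd hdP
  ext y
  obtain ⟨e, he, rfl⟩ := htrans x y
  by_cases heP : e ∈ P
  · rw [Perm.apply_apply_eq_of_mul_mul_self_eq_inv hs (hsP e heP),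
      Perm.apply_apply_eq_of_mul_mul_self_eq_inv hdd (hD.mul_mul_self_eq_inv hd hdP heP), hx]
  · set q := e * d
    have hq : q ∈ P := hD.mul_mem_of_notMem e he d hd heP hdP
    have he : e = q * d := by rw [mul_assoc, hdd, mul_one]
    have hsd : s (d x) = x := by rw [← hx, ← Perm.mul_apply, hs, Perm.one_apply]
    have hdd' : d (d x) = x := by rw [← Perm.mul_apply, hdd, Perm.one_apply]
    rw [he, Perm.mul_apply, Perm.apply_apply_eq_of_mul_mul_self_eq_inv hs (hsP q hq),
      Perm.apply_apply_eq_of_mul_mul_self_eq_inv hdd (hD.mul_mul_self_eq_inv hd hdP hq),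
      hsd, hdd']

theorem le_of_isDihedralOver (hD : P.IsDihedralOver D) (htrans : ∀ a b : α, ∃ g ∈ D, g a = b)
    {E : Subgroup (Perm α)} (hE : P.IsDihedralOver E)
    (hfree : ∀ g ∈ E, ∀ a : α, g a = a → g = 1) : E ≤ D := by
  intro s hs
  by_cases hsP : s ∈ P
  · exact hD.le hsP
  obtain ⟨x, -⟩ : ∃ x, s x ≠ x := by
    by_contra! h
    exact hsP ((Perm.ext h : s = 1) ▸ P.one_mem)
  obtain ⟨d, hd, hdx⟩ := htrans x (s x)
  have hdP : d ∉ P := by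
    intro hdP
    have : d⁻¹ * s = 1 := hfree _ (E.mul_mem (E.inv_mem (hE.le hdP)) hs) x
      (by rw [Perm.mul_apply, ← hdx, Perm.inv_def, symm_apply_apply])
    exact hsP (inv_mul_eq_one.mp this ▸ hdP)
  have hsd : s = d := hD.eq_of_apply_eq htrans hd hdP (hE.mul_self_of_notMem s hs hsP)
    (fun q hq => hE.mul_mul_self_eq_inv hs hsP hq) hdx.symm
  exact hsd ▸ hd

end Subgroup.IsDihedralOver

theorem Subgroup.exists_mem_map_conj_apply_eq {α : Type*} {D : Subgroup (Perm α)}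
    (htrans : ∀ a b : α, ∃ g ∈ D, g a = b) (g : Perm α) (a b : α) :
    ∃ h ∈ D.map (MulAut.conj g).toMonoidHom, h a = b := by
  obtain ⟨d, hd, hdab⟩ := htrans (g⁻¹ a) (g⁻¹ b)
  refine ⟨g * d * g⁻¹, ⟨d, hd, rfl⟩, ?_⟩
  rw [Perm.mul_apply, Perm.mul_apply, hdab, ← Perm.mul_apply, mul_inv_cancel, Perm.one_apply]

theorem Sylow.exists_subgroupOf_eq {G : Type*} [Group G] [Finite G] {p k : ℕ} [Fact p.Prime]
    {M P : Subgroup G} (hsyl : ∀ Q : Sylow p M, Nat.card Q = p ^ k) (hPM : P ≤ M)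
    (hP : Nat.card P = p ^ k) : ∃ Q : Sylow p M, P.subgroupOf M = Q := by
  have hcard : Nat.card (P.subgroupOf M) = p ^ k := by
    rw [← hP]
    exact Nat.card_congr (Subgroup.subgroupOfEquivOfLe hPM).toEquiv
  obtain ⟨Q, hQ⟩ := (IsPGroup.of_card hcard).exists_le_sylow
  exact ⟨Q, Subgroup.eq_of_le_of_card_ge hQ (by rw [hsyl Q, hcard])⟩

theorem Sylow.exists_map_conj_eq {G : Type*} [Group G] [Finite G] {p k : ℕ} [Fact p.Prime]
    {M P₁ P₂ : Subgroup G} (hsyl : ∀ Q : Sylow p M, Nat.card Q = p ^ k) (h₁ : P₁ ≤ M)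
    (h₂ : P₂ ≤ M) (hc₁ : Nat.card P₁ = p ^ k) (hc₂ : Nat.card P₂ = p ^ k) :
    ∃ g ∈ M, P₁.map (MulAut.conj g).toMonoidHom = P₂ := by
  obtain ⟨Q₁, hQ₁⟩ := Sylow.exists_subgroupOf_eq hsyl h₁ hc₁
  obtain ⟨Q₂, hQ₂⟩ := Sylow.exists_subgroupOf_eq hsyl h₂ hc₂
  obtain ⟨g, hg⟩ := MulAction.exists_smul_eq M Q₁ Q₂
  have hinj : Function.Injective (MulAut.conj (g : G)).toMonoidHom := (MulAut.conj _).injective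
  refine ⟨g, g.2, Subgroup.eq_of_le_of_card_ge ?_ ?_⟩
  · rintro _ ⟨x, hx, rfl⟩
    have hxQ : (⟨x, h₁ hx⟩ : M) ∈ (Q₁ : Subgroup M) := hQ₁ ▸ Subgroup.mem_subgroupOf.mpr hx
    have := Subgroup.smul_mem_pointwise_smul _ (MulAut.conj g) _ hxQ
    rwa [← Sylow.coe_subgroup_smul, hg, ← hQ₂, Subgroup.mem_subgroupOf] at this
  · rw [Subgroup.card_map_of_injective hinj, hc₁, hc₂]

theorem regular_dihedral_conjugate_general (M : Subgroup (Equiv.Perm (Fin 6)))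
    (hsyl : ∀ P : Sylow 3 M, Nat.card P = 3) :
    ∀ D₁ D₂ : Subgroup (Equiv.Perm (Fin 6)), D₁ ≤ M → D₂ ≤ M →
      (∀ a b : Fin 6, ∃ g ∈ D₁, g a = b) →
      (∀ g ∈ D₁, ∀ a : Fin 6, g a = a → g = 1) →
      Nonempty (D₁ ≃* DihedralGroup 3) →
      (∀ a b : Fin 6, ∃ g ∈ D₂, g a = b) →
      (∀ g ∈ D₂, ∀ a : Fin 6, g a = a → g = 1) →
      Nonempty (D₂ ≃* DihedralGroup 3) →
      ∃ g ∈ M, Subgroup.map (MulAut.conj g).toMonoidHom D₁ = D₂ := by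
  intro D₁ D₂ hD₁M hD₂M htrans₁ _ ⟨e₁⟩ _ hfree₂ ⟨e₂⟩
  obtain ⟨P₁, hP₁, hc₁⟩ := Subgroup.exists_isDihedralOver_of_mulEquiv e₁
  obtain ⟨P₂, hP₂, hc₂⟩ := Subgroup.exists_isDihedralOver_of_mulEquiv e₂
  obtain ⟨g, hgM, hg⟩ := Sylow.exists_map_conj_eq (k := 1) (by simpa using hsyl)
    (hP₁.le.trans hD₁M) (hP₂.le.trans hD₂M) (by rw [hc₁, pow_one]) (by rw [hc₂, pow_one])
  have hinj : Function.Injective (MulAut.conj g).toMonoidHom := (MulAut.conj g).injective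
  have hle : D₂ ≤ D₁.map (MulAut.conj g).toMonoidHom :=
    (hg ▸ hP₁.map hinj).le_of_isDihedralOver
      (Subgroup.exists_mem_map_conj_apply_eq htrans₁ g) hP₂ hfree₂
  refine ⟨g, hgM, (Subgroup.eq_of_le_of_card_ge hle ?_).symm⟩
  rw [Subgroup.card_map_of_injective hinj, Nat.card_congr e₁.toEquiv, Nat.card_congr e₂.toEquiv]

/-- Let `M` be a transitive permutation group of degree 6
containing a regular dihedral subgroup of order 6, and suppose a Sylow
3-subgroup of `M` has order 3. Then all regular dihedral subgroups of order 6
of `M` are conjugate in `M`. -/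
theorem regular_dihedral_conjugate (M : Subgroup (Equiv.Perm (Fin 6)))
    (htrans : ∀ a b : Fin 6, ∃ g ∈ M, g a = b)
    (hdih : ∃ D : Subgroup (Equiv.Perm (Fin 6)), D ≤ M ∧
      (∀ a b : Fin 6, ∃ g ∈ D, g a = b) ∧
      (∀ g ∈ D, ∀ a : Fin 6, g a = a → g = 1) ∧
      Nonempty (D ≃* DihedralGroup 3))
    (hsyl : ∀ P : Sylow 3 M, Nat.card P = 3) :
    ∀ D₁ D₂ : Subgroup (Equiv.Perm (Fin 6)), D₁ ≤ M → D₂ ≤ M →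
      (∀ a b : Fin 6, ∃ g ∈ D₁, g a = b) →
      (∀ g ∈ D₁, ∀ a : Fin 6, g a = a → g = 1) →
      Nonempty (D₁ ≃* DihedralGroup 3) →
      (∀ a b : Fin 6, ∃ g ∈ D₂, g a = b) →
      (∀ g ∈ D₂, ∀ a : Fin 6, g a = a → g = 1) →
      Nonempty (D₂ ≃* DihedralGroup 3) →
      ∃ g ∈ M, Subgroup.map (MulAut.conj g).toMonoidHom D₁ = D₂ :=
  regular_dihedral_conjugate_general M hsyl
end
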